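/- arXiv:1510.07143 — 4 statements merged into one kernel-verified Lean document; each statement's English description precedes it below -/
import Mathlib

section
/- (Three subgroup lemma for normal subgroups) If F, H, L are normal subgroups of a group G, then [[F,H],L] ≤ [[F,L],H] · [F,[H,L]]. -/
/-- Three subgroup lemma for normal subgroups:
`[[F,H],L] ≤ [[F,L],H] · [F,[H,L]]`. -/
theorem three_subgroup_lemma {G : Type*} [Group G] (F H L : Subgroup G)
    [F.Normal] [H.Normal] [L.Normal] :
    ⁅⁅F, H⁆, L⁆ ≤ ⁅⁅F, L⁆, H⁆ ⊔ ⁅F, ⁅H, L⁆⁆ := by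
  set K : Subgroup G := ⁅⁅F, L⁆, H⁆ ⊔ ⁅F, ⁅H, L⁆⁆ with hK
  haveI : K.Normal := Subgroup.sup_normal _ _
  let π := QuotientGroup.mk' K
  have hsurj : Function.Surjective π := QuotientGroup.mk'_surjective K
  have hker : π.ker = K := QuotientGroup.ker_mk' K
  have key : ∀ (A : Subgroup G), A ≤ K → A.map π = ⊥ := fun A hA =>
    (Subgroup.map_eq_bot_iff A).mpr (hA.trans hker.ge)
  have h1 : ⁅⁅H.map π, L.map π⁆, F.map π⁆ = ⊥ := by
    rw [← Subgroup.map_commutator, ← Subgroup.map_commutator,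
      Subgroup.commutator_comm ⁅H, L⁆ F]
    exact key _ (le_sup_right.trans le_rfl)
  have h2 : ⁅⁅L.map π, F.map π⁆, H.map π⁆ = ⊥ := by
    rw [← Subgroup.map_commutator, ← Subgroup.map_commutator,
      Subgroup.commutator_comm L F]
    exact key _ le_sup_left
  have h3 : ⁅⁅F.map π, H.map π⁆, L.map π⁆ = ⊥ :=
    Subgroup.commutator_commutator_eq_bot_of_rotate h1 h2
  rw [← Subgroup.map_commutator, ← Subgroup.map_commutator] at h3
  intro x hx
  have : π x ∈ (⊥ : Subgroup (G ⧸ K)) := h3 ▸ Subgroup.mem_map_of_mem π hx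
  rwa [Subgroup.mem_bot, ← MonoidHom.mem_ker, hker] at this
end

section
/- Let A be an associative ring with 1 and I, J two-sided ideals of A. For any x ∈ GL(n,A,I) and y ∈ GL(n,A,J), the commutator xyx⁻¹y⁻¹ lies in GL(n,A,IJ+JI), i.e. all entries of xyx⁻¹y⁻¹ − 1 lie in IJ + JI. -/
/-!
In any ring, `xyx⁻¹y⁻¹ - 1 = (xy - yx) x⁻¹y⁻¹` and
`xy - yx = (x - 1)(y - 1) - (y - 1)(x - 1)`. For matrices with `x ≡ 1 mod I` and
`y ≡ 1 mod J` both products on the right have entries in `IJ + JI`, and this ideal of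
the matrix ring absorbs the factor `x⁻¹y⁻¹`.
-/

open Matrix

variable (n : Type*) [DecidableEq n] [Fintype n] (A : Type*) [Ring A]

/-- The elementary matrix `e_{ij}(ξ) = 1 + ξ E_{ij}` as a unit of the matrix ring
(its inverse is `e_{ij}(-ξ)`). -/
def elemUnit {n : Type*} [DecidableEq n] [Fintype n] {A : Type*} [Ring A]
    (i j : n) (h : i ≠ j) (ξ : A) : (Matrix n n A)ˣ where
  val := 1 + Matrix.single i j ξ
  inv := 1 + Matrix.single i j (-ξ)
  val_inv := by
    have h0 : Matrix.single i j ξ * Matrix.single i j (-ξ) = 0 :=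
      Matrix.single_mul_single_of_ne (h := h.symm) ..
    have h1 : Matrix.single i j ξ + Matrix.single i j (-ξ) = 0 := by
      rw [← Matrix.single_add, add_neg_cancel, Matrix.single_zero]
    rw [mul_add, mul_one, add_mul, one_mul, h0, add_zero, add_assoc, h1, add_zero]
  inv_val := by
    have h0 : Matrix.single i j (-ξ) * Matrix.single i j ξ = 0 :=
      Matrix.single_mul_single_of_ne (h := h.symm) ..
    have h1 : Matrix.single i j (-ξ) + Matrix.single i j ξ = 0 := by
      rw [← Matrix.single_add, neg_add_cancel, Matrix.single_zero]
    rw [mul_add, mul_one, add_mul, one_mul, h0, add_zero, add_assoc, h1, add_zero]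

/-- The subgroup `E(n,S)` of `GL(n,A)` generated by the elementary matrices
`e_{ij}(ξ)` with `ξ ∈ S`, `i ≠ j`. -/
def elemSubgroup (S : Set A) : Subgroup (Matrix n n A)ˣ :=
  Subgroup.closure {u : (Matrix n n A)ˣ | ∃ i j : n, ∃ ξ ∈ S, i ≠ j ∧
    u.val = 1 + Matrix.single i j ξ}

/-- The relative elementary subgroup `E(n,A,I)`, the normal closure of `E(n,I)`
in `E(n,A)`. -/
def relElemSubgroup (I : TwoSidedIdeal A) : Subgroup (Matrix n n A)ˣ :=
  Subgroup.closure {x : (Matrix n n A)ˣ |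
    ∃ c ∈ elemSubgroup n A (Set.univ : Set A), ∃ u ∈ elemSubgroup n A {a : A | a ∈ I},
      x = c * u * c⁻¹}

/-- The principal congruence subgroup `GL(n,A,K)`: invertible matrices congruent to the
identity modulo `K`.  (This set is already a group, so it coincides with the subgroup it
generates.) -/
def congrSubgroup (K : TwoSidedIdeal A) : Subgroup (Matrix n n A)ˣ :=
  Subgroup.closure {u : (Matrix n n A)ˣ | ∀ i j : n, (u.val - 1) i j ∈ K}

theorem Units.val_mul_mul_inv_mul_inv_sub_one {R : Type*} [Ring R] (x y : Rˣ) :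
    ((x * y * x⁻¹ * y⁻¹ : Rˣ) : R) - 1
      = ((x - 1) * (y - 1) - (y - 1) * (x - 1)) * ((x⁻¹ * y⁻¹ : Rˣ) : R) := by
  have hinv : (y : R) * x * ((x⁻¹ * y⁻¹ : Rˣ) : R) = 1 := by
    rw [← val_mul, ← val_mul, mul_assoc y, _root_.mul_inv_cancel_left,
      _root_.mul_inv_cancel, val_one]
  have hcomm : ((x : R) - 1) * (y - 1) - (y - 1) * (x - 1) = x * y - y * x := by noncomm_ring
  rw [hcomm, sub_mul, hinv, ← val_mul, ← val_mul, mul_assoc (x * y)]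

theorem TwoSidedIdeal.val_mul_mul_inv_mul_inv_sub_one_mem {R : Type*} [Ring R]
    (K : TwoSidedIdeal R) {x y : Rˣ} (hxy : ((x : R) - 1) * (y - 1) ∈ K)
    (hyx : ((y : R) - 1) * (x - 1) ∈ K) :
    ((x * y * x⁻¹ * y⁻¹ : Rˣ) : R) - 1 ∈ K := by
  rw [Units.val_mul_mul_inv_mul_inv_sub_one]
  exact K.mul_mem_right _ _ (K.sub_mem hxy hyx)

theorem TwoSidedIdeal.mul_mem_matrix_of_mul_mem {R ι : Type*} [Ring R] [Fintype ι]
    {I J K : TwoSidedIdeal R} (hIJ : ∀ a ∈ I, ∀ b ∈ J, a * b ∈ K) {P Q : Matrix ι ι R}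
    (hP : P ∈ I.matrix ι) (hQ : Q ∈ J.matrix ι) : P * Q ∈ K.matrix ι :=
  fun i j => K.finsetSum_mem _ _ fun k _ => hIJ _ (hP i k) _ (hQ k j)

/-- If `x ∈ GL(n,A,I)` and `y ∈ GL(n,A,J)`, then all entries of `xyx⁻¹y⁻¹ - 1` lie in
the symmetrized product `IJ + JI` (the two-sided ideal generated by the products
`ab`, `ba` with `a ∈ I`, `b ∈ J`). -/
theorem commutator_congruence_mem {N : ℕ} {A : Type*} [Ring A]
    (I J : TwoSidedIdeal A) (x y : (Matrix (Fin N) (Fin N) A)ˣ)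
    (hx : ∀ i j, (x.val - 1) i j ∈ I) (hy : ∀ i j, (y.val - 1) i j ∈ J) :
    ∀ i j, ((x * y * x⁻¹ * y⁻¹).val - 1) i j ∈
      TwoSidedIdeal.span {z : A | ∃ a ∈ I, ∃ b ∈ J, z = a * b ∨ z = b * a} := by
  set K := TwoSidedIdeal.span {z : A | ∃ a ∈ I, ∃ b ∈ J, z = a * b ∨ z = b * a}
  have hIJ : ∀ a ∈ I, ∀ b ∈ J, a * b ∈ K :=
    fun a ha b hb => TwoSidedIdeal.subset_span ⟨a, ha, b, hb, Or.inl rfl⟩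
  have hJI : ∀ b ∈ J, ∀ a ∈ I, b * a ∈ K :=
    fun b hb a ha => TwoSidedIdeal.subset_span ⟨a, ha, b, hb, Or.inr rfl⟩
  exact (K.matrix (Fin N)).val_mul_mul_inv_mul_inv_sub_one_mem
    (TwoSidedIdeal.mul_mem_matrix_of_mul_mem hIJ hx hy)
    (TwoSidedIdeal.mul_mem_matrix_of_mul_mem hJI hy hx)
end

section
/- Let A be an associative ring with 1 that is finitely generated as a module over a Noetherian commutative ring R. For any s ∈ R there exists a positive integer k such that the localization map GL(n, A, s^k A) → GL(n, A_s) is injective; equivalently, s^k A injects into A_s. -/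
/-!
The kernel of `A → A_s` is the `s`-power torsion of `A`, i.e. the union of the kernels of the
powers of multiplication by `s`. Since `A` is a Noetherian `R`-module, this ascending chain of
kernels stabilizes, and for large `k` the stable kernel meets `s^k A` trivially. Two elements of
`GL(N, A, s^k A)` differ by a matrix with entries in `s^k A`, so if they agree over `A_s` they
are equal.
-/

open Filter

theorem Module.End.eventually_disjoint_iSup_ker_pow_range_pow {R M : Type*} [Semiring R]
    [AddCommMonoid M] [Module R M] [IsNoetherian R M] (f : Module.End R M) :
    ∀ᶠ n in atTop, Disjoint (⨆ m, LinearMap.ker (f ^ m)) (LinearMap.range (f ^ n)) := by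
  filter_upwards [f.eventually_iSup_ker_pow_eq, f.eventually_disjoint_ker_pow_range_pow]
    with n hker hdisj
  rwa [hker]

section

variable {R M : Type*} [CommSemiring R] [AddCommMonoid M] [Module R M]

theorem LocalizedModule.ker_mkLinearMap_powers_le (s : R) :
    LinearMap.ker (LocalizedModule.mkLinearMap (Submonoid.powers s) M) ≤
      ⨆ m, LinearMap.ker (algebraMap R (Module.End R M) s ^ m) := by
  intro x hx
  obtain ⟨⟨_, m, rfl⟩, hm⟩ := (IsLocalizedModule.eq_zero_iff (Submonoid.powers s) _).mp hx
  refine Submodule.mem_iSup_of_mem m ?_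
  simpa [← map_pow, Module.algebraMap_end_apply, Submonoid.smul_def] using hm

theorem LocalizedModule.exists_pos_pow_smul_eq_zero_of_mkLinearMap_eq_zero [IsNoetherian R M]
    (s : R) :
    ∃ k, 0 < k ∧ ∀ a : M,
      LocalizedModule.mkLinearMap (Submonoid.powers s) M (s ^ k • a) = 0 → s ^ k • a = 0 := by
  obtain ⟨k, hdisj, hk⟩ :=
    ((algebraMap R (Module.End R M) s).eventually_disjoint_iSup_ker_pow_range_pow.and
      (eventually_gt_atTop 0)).exists
  refine ⟨k, hk, fun a ha ↦ (Submodule.disjoint_def.mp hdisj) _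
    (ker_mkLinearMap_powers_le s ha) ⟨a, ?_⟩⟩
  simp [← map_pow, Module.algebraMap_end_apply]

end

/-- If `A` is module finite over a commutative Noetherian ring `R` and `s ∈ R`, then for
some `k > 0` the localization map `GL(n, A, s^k A) → GL(n, A_s)` (induced entrywise by
the canonical map `A → A_s`) is injective. -/
theorem localization_injective_on_congrSubgroup {R : Type*} [CommRing R]
    [IsNoetherianRing R] (A : Type*) [Ring A] [Algebra R A] [Module.Finite R A]
    (N : ℕ) (s : R) :
    ∃ k : ℕ, 0 < k ∧
      ∀ g h : (Matrix (Fin N) (Fin N) A)ˣ,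
        (∀ i j, ∃ a : A, (g.val - 1) i j = s ^ k • a) →
        (∀ i j, ∃ a : A, (h.val - 1) i j = s ^ k • a) →
        g.val.map (LocalizedModule.mkLinearMap (Submonoid.powers s) A) =
          h.val.map (LocalizedModule.mkLinearMap (Submonoid.powers s) A) →
        g = h := by
  obtain ⟨k, hk, hinj⟩ :=
    LocalizedModule.exists_pos_pow_smul_eq_zero_of_mkLinearMap_eq_zero (M := A) s
  refine ⟨k, hk, fun g h hg hh heq ↦ Units.ext <| Matrix.ext fun i j ↦ ?_⟩
  obtain ⟨a, ha⟩ := hg i j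
  obtain ⟨b, hb⟩ := hh i j
  have hdiff : g.val i j - h.val i j = s ^ k • (a - b) := by
    rw [smul_sub, ← ha, ← hb, Matrix.sub_apply, Matrix.sub_apply, sub_sub_sub_cancel_right]
  have hloc : LocalizedModule.mkLinearMap (Submonoid.powers s) A (s ^ k • (a - b)) = 0 := by
    rw [← hdiff, map_sub, sub_eq_zero]
    exact congrFun (congrFun heq i) j
  rw [← sub_eq_zero, hdiff, hinj _ hloc]
end

section
/- Let R be a commutative Noetherian ring, A a module finite R-algebra, I a two-sided ideal of A, and s ∈ R. For any given positive integer l, there exists an integer m such that I ∩ s^m A ⊆ s^l I. -/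
/-- Artin–Rees type lemma: if `A` is module finite over a commutative Noetherian ring `R`,
`I ⊴ A` a two-sided ideal and `s ∈ R`, then for any `l > 0` there is an `m` with
`I ∩ s^m A ⊆ s^l I`. -/
theorem ideal_inter_smul_subset {R : Type*} [CommRing R] [IsNoetherianRing R]
    (A : Type*) [Ring A] [Algebra R A] [Module.Finite R A]
    (I : TwoSidedIdeal A) (s : R) (l : ℕ) (hl : 0 < l) :
    ∃ m : ℕ, ∀ x : A, x ∈ I → (∃ a : A, x = s ^ m • a) →
      ∃ c ∈ I, x = s ^ l • c := by
  -- `I` as an `R`-submodule of `A`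
  set N : Submodule R A :=
    { carrier := I
      add_mem' := fun ha hb => I.add_mem ha hb
      zero_mem' := I.zero_mem
      smul_mem' := fun r x hx => by
        rw [Algebra.smul_def]; exact I.mul_mem_left _ _ hx } with hN
  have hNmem : ∀ x : A, x ∈ N ↔ x ∈ I := fun x => Iff.rfl
  -- target submodule `s^l • N`
  set T : Submodule R A := N.map (LinearMap.lsmul R A (s ^ l)) with hT
  -- the ascending chain
  set L : ℕ → Submodule R A := fun k => T.comap (LinearMap.lsmul R A (s ^ k)) with hL
  have hmono : Monotone L := by
    intro i j hij
    intro a ha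
    simp only [hL, Submodule.mem_comap, LinearMap.lsmul_apply] at ha ⊢
    obtain ⟨d, rfl⟩ := Nat.exists_eq_add_of_le hij
    rw [pow_add, mul_comm, mul_smul]
    exact T.smul_mem _ ha
  have : IsNoetherian R A := inferInstance
  obtain ⟨n, hn⟩ := monotone_stabilizes_iff_noetherian.mpr this ⟨L, hmono⟩
  refine ⟨n, fun x hx hxa => ?_⟩
  obtain ⟨a, rfl⟩ := hxa
  have h1 : a ∈ L (n + l) := by
    simp only [hL, Submodule.mem_comap, LinearMap.lsmul_apply, hT]
    refine ⟨s ^ n • a, hx, ?_⟩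
    simp only [LinearMap.lsmul_apply, ← mul_smul, ← pow_add, add_comm]
  have h2 : a ∈ L n := by
    have heq : L n = L (n + l) := hn (n + l) (Nat.le_add_right n l)
    exact heq ▸ h1
  simp only [hL, Submodule.mem_comap, LinearMap.lsmul_apply, hT, Submodule.mem_map] at h2
  obtain ⟨c, hc, hceq⟩ := h2
  exact ⟨c, hc, hceq.symm⟩
end
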